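/- arXiv:2207.09316 — 5 statements merged into one kernel-verified Lean document; each statement's English description precedes it below -/
import Mathlib

section
/- Let n ≥ 1, T ≥ 1, 0 < α ≤ β, and set κ = β/α. For each t = 1, …, T let f_1^t, …, f_n^t : ℝ → ℝ belong to the class F(α,β), and write f^t(x) = ∑_{i=1}^n f_i^t(x_i). Then the potential benefit satisfies Pot_T := ∑_{t=1}^T ( f^t(𝟙_n) − inf_{x ∈ S_n} f^t(x) ) ≤ (n/2)·α·(κ − 1)·T. -/
/-!
Each `f ∈ F(α,β)` is squeezed between the quadratics `α/2 · x²` and `β/2 · x²`: both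
`f - α/2 · x²` and `β/2 · x² - f` are convex with a critical point at `0`, where they vanish.
So `fᵗ(𝟙ₙ) ≤ nβ/2`, while on `Sₙ` one has `∑ xᵢ² ≥ n` and hence `fᵗ(x) ≥ nα/2`; every round
contributes at most `n(β - α)/2 = (n/2)·α·(κ - 1)`.
-/

/-- The class `F(α,β)`: differentiable, `α`-strongly convex (`x ↦ f x - (α/2)x²`
is convex), `β`-smooth (the derivative is `β`-Lipschitz), with `f(0) = 0` and
`f'(0) = 0`. -/
def MemF (α β : ℝ) (f : ℝ → ℝ) : Prop :=
  Differentiable ℝ f ∧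
  ConvexOn ℝ Set.univ (fun x => f x - α / 2 * x ^ 2) ∧
  (∀ x y : ℝ, |deriv f x - deriv f y| ≤ β * |x - y|) ∧
  f 0 = 0 ∧ deriv f 0 = 0

/-- The feasible set `Sₙ`: nonnegative vectors whose entries sum to `n`. -/
def feasibleSet (n : ℕ) : Set (Fin n → ℝ) :=
  {x | (∀ i, 0 ≤ x i) ∧ ∑ i, x i = (n : ℝ)}

open Finset Set

lemma ConvexOn.isMinOn_univ_of_deriv_eq_zero {g : ℝ → ℝ} {x : ℝ}
    (hg : ConvexOn ℝ univ g) (hd : DifferentiableAt ℝ g x) (h : deriv g x = 0) :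
    IsMinOn g univ x := by
  refine hg.isMinOn_of_rightDeriv_eq_zero (by simp) ?_
  rw [hd.hasDerivAt.hasDerivWithinAt.derivWithin (uniqueDiffWithinAt_Ioi x), h]

lemma ConvexOn.nonneg_of_deriv_zero_eq_zero {g : ℝ → ℝ} (hg : ConvexOn ℝ univ g)
    (hd : DifferentiableAt ℝ g 0) (h0 : g 0 = 0) (h0' : deriv g 0 = 0) (x : ℝ) : 0 ≤ g x :=
  h0 ▸ hg.isMinOn_univ_of_deriv_eq_zero hd h0' (mem_univ x)

lemma hasDerivAt_half_mul_sq (c y : ℝ) : HasDerivAt (fun x : ℝ => c / 2 * x ^ 2) (c * y) y :=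
  ((hasDerivAt_pow 2 y).const_mul (c / 2)).congr_deriv (by push_cast; ring)

namespace MemF

variable {α β : ℝ} {f : ℝ → ℝ}

lemma half_mul_sq_le (hf : MemF α β f) (x : ℝ) : α / 2 * x ^ 2 ≤ f x := by
  obtain ⟨hd, hconv, -, h0, h0'⟩ := hf
  have hg : HasDerivAt (fun x => f x - α / 2 * x ^ 2) (deriv f 0 - α * 0) 0 :=
    (hd 0).hasDerivAt.sub (hasDerivAt_half_mul_sq α 0)
  have := hconv.nonneg_of_deriv_zero_eq_zero hg.differentiableAt (by simp [h0])
    (by rw [hg.deriv, h0']; ring) x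
  linarith

lemma le_half_mul_sq (hf : MemF α β f) (x : ℝ) : f x ≤ β / 2 * x ^ 2 := by
  obtain ⟨hd, -, hlip, h0, h0'⟩ := hf
  have hg (y : ℝ) : HasDerivAt (fun x => β / 2 * x ^ 2 - f x) (β * y - deriv f y) y :=
    (hasDerivAt_half_mul_sq β y).sub (hd y).hasDerivAt
  have hgd : Differentiable ℝ (fun x => β / 2 * x ^ 2 - f x) := fun y => (hg y).differentiableAt
  have hmono : Monotone (deriv fun x => β / 2 * x ^ 2 - f x) := by
    intro a b hab
    have := (abs_le.mp (hlip b a)).2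
    rw [abs_of_nonneg (sub_nonneg.mpr hab)] at this
    simp only [(hg _).deriv]
    linarith
  have := (hmono.convexOn_univ_of_deriv hgd).nonneg_of_deriv_zero_eq_zero (hgd 0)
    (by simp [h0]) (by simp [(hg 0).deriv, h0']) x
  linarith

end MemF

lemma card_le_sum_sq_of_sum_eq_card {ι : Type*} [Fintype ι] {x : ι → ℝ}
    (hx : ∑ i, x i = Fintype.card ι) : (Fintype.card ι : ℝ) ≤ ∑ i, x i ^ 2 := by
  have h : 0 ≤ ∑ i, (x i - 1) ^ 2 := sum_nonneg fun i _ => sq_nonneg _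
  have expand : ∑ i, (x i - 1) ^ 2 = ∑ i, x i ^ 2 - 2 * ∑ i, x i + Fintype.card ι := by
    simp only [sub_sq, sum_add_distrib, sum_sub_distrib, ← mul_sum, mul_one, one_pow,
      sum_const, card_univ, nsmul_eq_mul]
  linarith

section Round

variable {n : ℕ} {α β : ℝ} {g : Fin n → ℝ → ℝ}

lemma sum_apply_one_le (hg : ∀ i, MemF α β (g i)) : ∑ i, g i 1 ≤ n * (β / 2) := by
  calc ∑ i, g i 1 ≤ ∑ _i : Fin n, β / 2 :=
        sum_le_sum fun i _ => by simpa using (hg i).le_half_mul_sq 1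
    _ = n * (β / 2) := by simp

lemma le_sInf_image_feasibleSet (hα : 0 ≤ α) (hg : ∀ i, MemF α β (g i)) :
    n * (α / 2) ≤ sInf ((fun x : Fin n → ℝ => ∑ i, g i (x i)) '' feasibleSet n) := by
  refine le_csInf ⟨_, fun _ => 1, ⟨fun _ => zero_le_one, by simp⟩, rfl⟩ ?_
  rintro _ ⟨x, ⟨-, hx⟩, rfl⟩
  have hsq := card_le_sum_sq_of_sum_eq_card (x := x) (by simpa using hx)
  rw [Fintype.card_fin] at hsq
  calc n * (α / 2) ≤ α / 2 * ∑ i, x i ^ 2 := by nlinarith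
    _ = ∑ i, α / 2 * x i ^ 2 := mul_sum _ _ _
    _ ≤ ∑ i, g i (x i) := sum_le_sum fun i _ => (hg i).half_mul_sq_le (x i)

lemma sum_apply_one_sub_sInf_image_le (hα : 0 ≤ α) (hg : ∀ i, MemF α β (g i)) :
    ∑ i, g i 1 - sInf ((fun x : Fin n → ℝ => ∑ i, g i (x i)) '' feasibleSet n)
      ≤ n / 2 * (β - α) := by
  linarith [sum_apply_one_le hg, le_sInf_image_feasibleSet hα hg]

end Round

theorem stmt_6_general (n T : ℕ)
    (α β : ℝ) (hα : 0 < α)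
    (f : ℕ → Fin n → ℝ → ℝ) (hf : ∀ t ∈ Finset.Icc 1 T, ∀ i, MemF α β (f t i)) :
    ∑ t ∈ Finset.Icc 1 T,
        ((∑ i, f t i 1) -
          sInf ((fun x : Fin n → ℝ => ∑ i, f t i (x i)) '' feasibleSet n))
      ≤ (n : ℝ) / 2 * α * (β / α - 1) * T := by
  calc _ ≤ ∑ _t ∈ Icc 1 T, (n : ℝ) / 2 * (β - α) :=
        sum_le_sum fun t ht => sum_apply_one_sub_sInf_image_le hα.le (hf t ht)
    _ = (n : ℝ) / 2 * α * (β / α - 1) * T := by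
        rw [sum_const, Nat.card_Icc, add_tsub_cancel_right, nsmul_eq_mul]
        field_simp

/-- With time-varying local costs `fᵢᵗ ∈ F(α,β)` for
`t = 1, …, T`, the potential benefit satisfies
`Pot_T = ∑_{t=1}^T (fᵗ(𝟙ₙ) - inf_{x ∈ Sₙ} fᵗ(x)) ≤ (n/2)·α·(κ - 1)·T`
where `κ = β/α`. -/
theorem stmt_6 (n T : ℕ) (hn : 1 ≤ n) (hT : 1 ≤ T)
    (α β : ℝ) (hα : 0 < α) (hαβ : α ≤ β)
    (f : ℕ → Fin n → ℝ → ℝ) (hf : ∀ t ∈ Finset.Icc 1 T, ∀ i, MemF α β (f t i)) :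
    ∑ t ∈ Finset.Icc 1 T,
        ((∑ i, f t i 1) -
          sInf ((fun x : Fin n → ℝ => ∑ i, f t i (x i)) '' feasibleSet n))
      ≤ (n : ℝ) / 2 * α * (β / α - 1) * T :=
  stmt_6_general n T α β hα f hf
end

section
/- Let 0 < α ≤ β and let f_i, f_j : ℝ → ℝ belong to the class F(α,β). Let x_i, x_j ≥ 0 and define the updated values x_i⁺ = x_i − (1/(2β))·(f_i'(x_i) − f_j'(x_j)) and x_j⁺ = x_j − (1/(2β))·(f_j'(x_j) − f_i'(x_i)). Then x_i⁺ ≥ x_i/2 ≥ 0, x_j⁺ ≥ x_j/2 ≥ 0, and x_i⁺ + x_j⁺ = x_i + x_j. -/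
lemma memF_deriv_bounds {α β : ℝ} (hα : 0 < α) (hαβ : α ≤ β) {f : ℝ → ℝ}
    (hf : MemF α β f) {x : ℝ} (hx : 0 ≤ x) :
    0 ≤ deriv f x ∧ deriv f x ≤ β * x := by
  obtain ⟨hd, hc, hl, h0, h0'⟩ := hf
  have hconv : ConvexOn ℝ Set.univ f := by
    have hq : ConvexOn ℝ Set.univ (fun x : ℝ => α / 2 * x ^ 2) :=
      (Even.convexOn_pow even_two).smul (by positivity : (0:ℝ) ≤ α / 2)
    have h := hc.add hq
    have : f = (fun x => f x - α / 2 * x ^ 2) + fun x => α / 2 * x ^ 2 := by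
      funext x; simp
    rwa [← this] at h
  have hmono := hconv.monotoneOn_deriv (fun y _ => hd y)
  constructor
  · have := hmono (Set.mem_univ 0) (Set.mem_univ x) hx
    rwa [h0'] at this
  · have := hl x 0
    rw [h0', sub_zero, sub_zero, abs_of_nonneg hx] at this
    calc deriv f x ≤ |deriv f x| := le_abs_self _
    _ ≤ β * x := this

/-- The RCD update with step `1/(2β)` keeps states nonnegative
(each is at least half of its previous value) and preserves the sum. -/
theorem stmt_7 (α β : ℝ) (hα : 0 < α) (hαβ : α ≤ β)
    (fi fj : ℝ → ℝ) (hfi : MemF α β fi) (hfj : MemF α β fj)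
    (xi xj : ℝ) (hxi : 0 ≤ xi) (hxj : 0 ≤ xj) :
    (xi - 1 / (2 * β) * (deriv fi xi - deriv fj xj) ≥ xi / 2 ∧ xi / 2 ≥ 0) ∧
    (xj - 1 / (2 * β) * (deriv fj xj - deriv fi xi) ≥ xj / 2 ∧ xj / 2 ≥ 0) ∧
    (xi - 1 / (2 * β) * (deriv fi xi - deriv fj xj)) +
      (xj - 1 / (2 * β) * (deriv fj xj - deriv fi xi)) = xi + xj := by
  have hβ : 0 < β := lt_of_lt_of_le hα hαβ
  obtain ⟨hi0, hiU⟩ := memF_deriv_bounds hα hαβ hfi hxi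
  obtain ⟨hj0, hjU⟩ := memF_deriv_bounds hα hαβ hfj hxj
  have key : ∀ a b x : ℝ, 0 ≤ b → a ≤ β * x →
      x - 1 / (2 * β) * (a - b) ≥ x / 2 := by
    intro a b x hb ha
    have h1 : 1 / (2 * β) * (a - b) ≤ 1 / (2 * β) * (β * x) := by
      apply mul_le_mul_of_nonneg_left _ (by positivity)
      linarith
    have h2 : 1 / (2 * β) * (β * x) = x / 2 := by field_simp
    linarith [h1, h2.le]
  refine ⟨⟨key _ _ _ hj0 hiU, by linarith⟩,
    ⟨key _ _ _ hi0 hjU, by linarith⟩, by ring⟩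
end

section
/- Let n ≥ 2, 0 < α ≤ β, let φ_1, …, φ_n ∈ [α/2, β/2] and φ' ∈ [α/2, β/2]. Then for every x ∈ ℝⁿ with x_i ≥ 0 for all i and ∑_{i=1}^n x_i = n, the expected change of the total quadratic cost under a replacement satisfies (1/n)·∑_{ℓ=1}^n ( ∑_{i ≠ ℓ} φ_i·( (1 − 1/n)·x_i + (1/n)·x_ℓ )² + φ' ) − ∑_{i=1}^n φ_i·x_i² ≤ ((3n² − 3n + 1)/(2n²))·(β − α). -/
open Finset

lemma key_lem (c x : ℝ) (hc : 0 < c) (hc2 : 2*c ≤ 1) (hx : 0 ≤ x) (hxn : c*x ≤ 1)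
    (h : 2*(1-c)*x + c ≤ (3-c)*x^2) : 1 ≤ 2*x - c*x^2 := by
  nlinarith [mul_nonneg hx (sub_nonneg.2 hxn), mul_nonneg hc.le hx, sq_nonneg (3*x-2), sq_nonneg (2*x-1), mul_nonneg (mul_nonneg hc.le hx) hx, mul_nonneg hc.le (sub_nonneg.2 hxn), sq_nonneg (x-1), mul_nonneg (sub_nonneg.2 hc2) hx]

set_option maxHeartbeats 2000000 in
/-- Quadratic local costs `fᵢ(x) = φᵢ·x²` with
`φᵢ ∈ [α/2, β/2]`: for feasible `x ∈ Sₙ`, the expected change of the total cost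
under a replacement (uniform departure plus arrival of a new agent with cost
`φ'·x²` and initial estimate `1`) is at most `((3n² - 3n + 1)/(2n²))·(β - α)`. -/
theorem stmt_14 (n : ℕ) (hn : 2 ≤ n) (α β : ℝ) (hα : 0 < α) (hαβ : α ≤ β)
    (φ : Fin n → ℝ) (hφ : ∀ i, φ i ∈ Set.Icc (α / 2) (β / 2))
    (φ' : ℝ) (hφ' : φ' ∈ Set.Icc (α / 2) (β / 2))
    (x : Fin n → ℝ) (hx : ∀ i, 0 ≤ x i) (hsum : ∑ i, x i = (n : ℝ)) :
    (1 / (n : ℝ)) * (∑ ℓ, ((∑ i ∈ Finset.univ.erase ℓ,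
        φ i * ((1 - 1 / (n : ℝ)) * x i + (1 / (n : ℝ)) * x ℓ) ^ 2) + φ'))
      - ∑ i, φ i * (x i) ^ 2
      ≤ (3 * (n : ℝ) ^ 2 - 3 * (n : ℝ) + 1) / (2 * (n : ℝ) ^ 2) * (β - α) := by
  have hN2 : (2:ℝ) ≤ (n:ℝ) := by exact_mod_cast hn
  have hN0 : (0:ℝ) < (n:ℝ) := by linarith
  set N : ℝ := (n:ℝ) with hNdef
  set c : ℝ := 1 / N with hcdef
  have hc0 : 0 < c := by rw [hcdef]; positivity
  have hcN : c * N = 1 := by rw [hcdef]; exact one_div_mul_cancel hN0.ne'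
  have hc2 : 2 * c ≤ 1 := by
    have h1 : 0 ≤ c * (N - 2) := mul_nonneg hc0.le (by linarith)
    nlinarith [hcN]
  clear_value N c
  set S : ℝ := ∑ i, φ i * (x i) ^ 2 with hS
  set T : ℝ := ∑ i, φ i * x i with hT
  set Φ : ℝ := ∑ i, φ i with hΦ
  set Q : ℝ := ∑ i, (x i) ^ 2 with hQ
  clear_value S T Φ Q
  -- basic facts
  have hxN : ∀ i, x i ≤ N := by
    intro i
    calc x i ≤ ∑ j, x j := Finset.single_le_sum (fun j _ => hx j) (Finset.mem_univ i)
    _ = N := hsum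
  have hQ0 : 0 ≤ Q := by rw [hQ]; exact Finset.sum_nonneg fun i _ => sq_nonneg _
  have hQN : N ≤ Q := by
    have h1 : (0:ℝ) ≤ ∑ i, (x i - 1)^2 := Finset.sum_nonneg fun i _ => sq_nonneg _
    have h2 : ∑ i, (x i - 1)^2 = Q - 2 * (∑ i, x i) + N := by
      rw [Finset.sum_congr rfl (fun i _ => by ring :
        ∀ i ∈ Finset.univ, (x i - 1)^2 = (x i)^2 - 2 * x i + 1)]
      rw [Finset.sum_add_distrib, Finset.sum_sub_distrib, Finset.sum_const,
        Finset.card_univ, Fintype.card_fin, nsmul_eq_mul, mul_one, ← Finset.mul_sum,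
        ← hQ, ← hNdef]
    rw [hsum] at h2
    linarith
  have hcQ : 1 ≤ c * Q := by
    have := mul_le_mul_of_nonneg_left hQN hc0.le
    linarith [hcN]
  have hcx : ∀ i, c * x i ≤ 1 := by
    intro i
    have := mul_le_mul_of_nonneg_left (hxN i) hc0.le
    linarith [hcN]
  -- the identity
  have h1 : ∀ ℓ : Fin n, (∑ i ∈ Finset.univ.erase ℓ, φ i * ((1 - c) * x i + c * x ℓ) ^ 2)
      = (1-c)^2*S + (2*(c*(1-c))*T) * x ℓ + (c^2*Φ) * (x ℓ)^2 - φ ℓ * (x ℓ)^2 := by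
    intro ℓ
    have e1 : (∑ i ∈ Finset.univ.erase ℓ, φ i * ((1 - c) * x i + c * x ℓ) ^ 2)
        + φ ℓ * ((1 - c) * x ℓ + c * x ℓ) ^ 2
        = ∑ i, φ i * ((1 - c) * x i + c * x ℓ) ^ 2 :=
      Finset.sum_erase_add Finset.univ _ (Finset.mem_univ ℓ)
    have e2 : (∑ i, φ i * ((1 - c) * x i + c * x ℓ) ^ 2)
        = (1-c)^2*S + (2*(c*(1-c))* x ℓ) * T + (c^2*(x ℓ)^2) * Φ := by
      rw [Finset.sum_congr rfl (fun i _ => by ring :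
        ∀ i ∈ Finset.univ, φ i * ((1 - c) * x i + c * x ℓ) ^ 2
          = (1-c)^2 * (φ i * (x i)^2) + (2*(c*(1-c))* x ℓ) * (φ i * x i)
            + (c^2*(x ℓ)^2) * (φ i))]
      rw [Finset.sum_add_distrib, Finset.sum_add_distrib, ← Finset.mul_sum,
        ← Finset.mul_sum, ← Finset.mul_sum, ← hS, ← hT, ← hΦ]
    linear_combination e1 + e2
  have h2 : (∑ ℓ, ((∑ i ∈ Finset.univ.erase ℓ, φ i * ((1 - c) * x i + c * x ℓ) ^ 2) + φ'))
      = N * ((1-c)^2*S) + (2*(c*(1-c))*T) * N + (c^2*Φ) * Q - S + N * φ' := by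
    rw [Finset.sum_congr rfl fun ℓ _ => by rw [h1 ℓ]]
    rw [Finset.sum_add_distrib, Finset.sum_sub_distrib, Finset.sum_add_distrib,
      Finset.sum_add_distrib, Finset.sum_const, Finset.sum_const, Finset.card_univ,
      Fintype.card_fin, nsmul_eq_mul, nsmul_eq_mul, ← Finset.mul_sum, ← Finset.mul_sum,
      hsum, ← hQ, ← hS, ← hNdef]
    try ring
  have hid : c * (∑ ℓ, ((∑ i ∈ Finset.univ.erase ℓ,
      φ i * ((1 - c) * x i + c * x ℓ) ^ 2) + φ')) - S
      = (∑ i, φ i * ((c^2 - 3*c) * (x i)^2 + 2*(c*(1-c)) * x i + c^3*Q)) + φ' := by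
    have e3 : (∑ i, φ i * ((c^2 - 3*c) * (x i)^2 + 2*(c*(1-c)) * x i + c^3*Q))
        = (c^2-3*c)*S + 2*(c*(1-c))*T + (c^3*Q)*Φ := by
      rw [Finset.sum_congr rfl (fun i _ => by ring :
        ∀ i ∈ Finset.univ, φ i * ((c^2 - 3*c) * (x i)^2 + 2*(c*(1-c)) * x i + c^3*Q)
          = (c^2-3*c) * (φ i * (x i)^2) + 2*(c*(1-c)) * (φ i * x i) + (c^3*Q) * (φ i))]
      rw [Finset.sum_add_distrib, Finset.sum_add_distrib, ← Finset.mul_sum,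
        ← Finset.mul_sum, ← Finset.mul_sum, ← hS, ← hT, ← hΦ]
    rw [h2, e3, hcdef]
    field_simp [hN0.ne']
    ring
  rw [hid]
  -- bounds
  set a : ℝ := α/2 with ha
  set d : ℝ := (β - α)/2 with hd
  clear_value a d
  have hd0 : 0 ≤ d := by rw [hd]; linarith
  have ha0 : 0 < a := by rw [ha]; linarith
  have hφlow : ∀ i, a ≤ φ i := fun i => (hφ i).1
  have hφhigh : ∀ i, φ i ≤ a + d := fun i => by have := (hφ i).2; rw [ha, hd]; linarith
  have hsplit : (∑ i, φ i * ((c^2 - 3*c) * (x i)^2 + 2*(c*(1-c)) * x i + c^3*Q))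
      = a * (∑ i, ((c^2 - 3*c) * (x i)^2 + 2*(c*(1-c)) * x i + c^3*Q))
        + ∑ i, (φ i - a) * ((c^2 - 3*c) * (x i)^2 + 2*(c*(1-c)) * x i + c^3*Q) := by
    calc (∑ i, φ i * ((c^2 - 3*c) * (x i)^2 + 2*(c*(1-c)) * x i + c^3*Q))
        = ∑ i, (a * ((c^2 - 3*c) * (x i)^2 + 2*(c*(1-c)) * x i + c^3*Q)
            + (φ i - a) * ((c^2 - 3*c) * (x i)^2 + 2*(c*(1-c)) * x i + c^3*Q)) :=
          Finset.sum_congr rfl fun i _ => by ring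
      _ = (∑ i, a * ((c^2 - 3*c) * (x i)^2 + 2*(c*(1-c)) * x i + c^3*Q))
            + ∑ i, (φ i - a) * ((c^2 - 3*c) * (x i)^2 + 2*(c*(1-c)) * x i + c^3*Q) :=
          Finset.sum_add_distrib
      _ = a * (∑ i, ((c^2 - 3*c) * (x i)^2 + 2*(c*(1-c)) * x i + c^3*Q))
            + ∑ i, (φ i - a) * ((c^2 - 3*c) * (x i)^2 + 2*(c*(1-c)) * x i + c^3*Q) := by
          rw [← Finset.mul_sum]
  have hsumg : (∑ i, ((c^2 - 3*c) * (x i)^2 + 2*(c*(1-c)) * x i + c^3*Q))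
      = (2*c^2 - 3*c)*Q + 2 - 2*c := by
    rw [Finset.sum_add_distrib, Finset.sum_add_distrib, Finset.sum_const,
      Finset.card_univ, Fintype.card_fin, nsmul_eq_mul, ← Finset.mul_sum,
      ← Finset.mul_sum, hsum, ← hQ, ← hNdef]
    linear_combination (2*(1-c) + c^2*Q) * hcN
  have hMg : ∀ i, (c^2 - 3*c) * (x i)^2 + 2*(c*(1-c)) * x i + c^3*Q
      ≤ 2*(c*(1-c)) * x i + c^3*Q - (c^2*(1-c)) * (x i)^2 := by
    intro i
    nlinarith [mul_nonneg hc0.le (sq_nonneg (x i)),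
      mul_nonneg (mul_nonneg hc0.le hc0.le) (mul_nonneg hc0.le (sq_nonneg (x i))),
      mul_nonneg (sub_nonneg.2 hc2) (mul_nonneg hc0.le (sq_nonneg (x i)))]
  have hM0 : ∀ i, 0 ≤ 2*(c*(1-c)) * x i + c^3*Q - (c^2*(1-c)) * (x i)^2 := by
    intro i
    nlinarith [mul_nonneg (mul_nonneg (mul_nonneg hc0.le (by linarith : (0:ℝ) ≤ 1 - c)) (hx i))
        (by linarith [hcx i] : (0:ℝ) ≤ 2 - c * x i),
      mul_nonneg (mul_nonneg (mul_nonneg hc0.le hc0.le) hc0.le) hQ0]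
  have hbi : ∀ i, (φ i - a) * ((c^2 - 3*c) * (x i)^2 + 2*(c*(1-c)) * x i + c^3*Q)
      ≤ d * (2*(c*(1-c)) * x i + c^3*Q - (c^2*(1-c)) * (x i)^2) := by
    intro i
    rcases le_or_gt ((c^2 - 3*c) * (x i)^2 + 2*(c*(1-c)) * x i + c^3*Q) 0 with hgi | hgi
    · have h1 : (φ i - a) * ((c^2 - 3*c) * (x i)^2 + 2*(c*(1-c)) * x i + c^3*Q) ≤ 0 :=
        mul_nonpos_of_nonneg_of_nonpos (by linarith [hφlow i]) hgi
      have h2 := mul_nonneg hd0 (hM0 i)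
      linarith
    · have h1 : (φ i - a) * ((c^2 - 3*c) * (x i)^2 + 2*(c*(1-c)) * x i + c^3*Q)
          ≤ d * ((c^2 - 3*c) * (x i)^2 + 2*(c*(1-c)) * x i + c^3*Q) :=
        mul_le_mul_of_nonneg_right (by linarith [hφhigh i]) hgi.le
      have h2 := mul_le_mul_of_nonneg_left (hMg i) hd0
      linarith
  have hsumM : (∑ i, (2*(c*(1-c)) * x i + c^3*Q - (c^2*(1-c)) * (x i)^2))
      = 2*(1-c) + c^3*Q := by
    rw [Finset.sum_sub_distrib, Finset.sum_add_distrib, Finset.sum_const,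
      Finset.card_univ, Fintype.card_fin, nsmul_eq_mul, ← Finset.mul_sum,
      ← Finset.mul_sum, hsum, ← hQ, ← hNdef]
    linear_combination (2*(1-c) + c^2*Q) * hcN
  have hmain : (∑ i, (φ i - a) * ((c^2 - 3*c) * (x i)^2 + 2*(c*(1-c)) * x i + c^3*Q))
      ≤ d * ((1-c)*(2-c)) := by
    by_cases hex : ∃ j, (c^2 - 3*c) * (x j)^2 + 2*(c*(1-c)) * x j + c^3*Q < 0
    · obtain ⟨j, hj⟩ := hex
      have h3 : c^2 ≤ c^2 * (c*Q) := by
        nlinarith [mul_nonneg (mul_nonneg hc0.le hc0.le) (by linarith : (0:ℝ) ≤ c*Q - 1)]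
      have hkey' : c * (2*(1-c)*(x j) + c) ≤ c * ((3-c)*(x j)^2) := by nlinarith [hj, h3]
      have hkey : 2*(1-c)*(x j) + c ≤ (3-c)*(x j)^2 := le_of_mul_le_mul_left hkey' hc0
      have hjx : 1 ≤ 2 * x j - c * (x j)^2 := key_lem c (x j) hc0 hc2 (hx j) (hcx j) hkey
      have hMj : c^3*Q + c*(1-c) ≤ 2*(c*(1-c)) * x j + c^3*Q - (c^2*(1-c)) * (x j)^2 := by
        nlinarith [mul_nonneg (mul_nonneg hc0.le (by linarith : (0:ℝ) ≤ 1 - c))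
          (by linarith : (0:ℝ) ≤ 2 * x j - c * (x j)^2 - 1)]
      have e1 : (∑ i ∈ Finset.univ.erase j,
            (φ i - a) * ((c^2 - 3*c) * (x i)^2 + 2*(c*(1-c)) * x i + c^3*Q))
          + (φ j - a) * ((c^2 - 3*c) * (x j)^2 + 2*(c*(1-c)) * x j + c^3*Q)
          = ∑ i, (φ i - a) * ((c^2 - 3*c) * (x i)^2 + 2*(c*(1-c)) * x i + c^3*Q) :=
        Finset.sum_erase_add Finset.univ _ (Finset.mem_univ j)
      have e2 : (∑ i ∈ Finset.univ.erase j,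
            d * (2*(c*(1-c)) * x i + c^3*Q - (c^2*(1-c)) * (x i)^2))
          + d * (2*(c*(1-c)) * x j + c^3*Q - (c^2*(1-c)) * (x j)^2)
          = ∑ i, d * (2*(c*(1-c)) * x i + c^3*Q - (c^2*(1-c)) * (x i)^2) :=
        Finset.sum_erase_add Finset.univ _ (Finset.mem_univ j)
      have hle : (∑ i ∈ Finset.univ.erase j,
            (φ i - a) * ((c^2 - 3*c) * (x i)^2 + 2*(c*(1-c)) * x i + c^3*Q))
          ≤ ∑ i ∈ Finset.univ.erase j,
            d * (2*(c*(1-c)) * x i + c^3*Q - (c^2*(1-c)) * (x i)^2) :=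
        Finset.sum_le_sum fun i _ => hbi i
      have hjneg : (φ j - a) * ((c^2 - 3*c) * (x j)^2 + 2*(c*(1-c)) * x j + c^3*Q) ≤ 0 :=
        mul_nonpos_of_nonneg_of_nonpos (by linarith [hφlow j]) hj.le
      have hdM : (∑ i, d * (2*(c*(1-c)) * x i + c^3*Q - (c^2*(1-c)) * (x i)^2))
          = d * (2*(1-c) + c^3*Q) := by
        rw [← Finset.mul_sum, hsumM]
      have hMjd : d * (c^3*Q + c*(1-c))
          ≤ d * (2*(c*(1-c)) * x j + c^3*Q - (c^2*(1-c)) * (x j)^2) :=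
        mul_le_mul_of_nonneg_left hMj hd0
      have hfin : d * (2*(1-c) + c^3*Q) - d * (c^3*Q + c*(1-c)) = d * ((1-c)*(2-c)) := by
        ring
      linarith
    · push_neg at hex
      have hle : (∑ i, (φ i - a) * ((c^2 - 3*c) * (x i)^2 + 2*(c*(1-c)) * x i + c^3*Q))
          ≤ ∑ i, d * ((c^2 - 3*c) * (x i)^2 + 2*(c*(1-c)) * x i + c^3*Q) :=
        Finset.sum_le_sum fun i _ =>
          mul_le_mul_of_nonneg_right (by linarith [hφhigh i]) (hex i)
      have hdg : (∑ i, d * ((c^2 - 3*c) * (x i)^2 + 2*(c*(1-c)) * x i + c^3*Q))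
          = d * ((2*c^2 - 3*c)*Q + 2 - 2*c) := by
        rw [← Finset.mul_sum, hsumg]
      have hsg : (2*c^2 - 3*c)*Q + 2 - 2*c ≤ -1 := by
        nlinarith [mul_nonneg (by linarith : (0:ℝ) ≤ 3 - 2*c) (by linarith : (0:ℝ) ≤ c*Q - 1)]
      have h4 : d * ((2*c^2 - 3*c)*Q + 2 - 2*c) ≤ d * (-1) := mul_le_mul_of_nonneg_left hsg hd0
      have h23 : (0:ℝ) ≤ d * ((1-c)*(2-c)) := mul_nonneg hd0 (by nlinarith)
      linarith
  -- assemble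
  have hag : a * (∑ i, ((c^2 - 3*c) * (x i)^2 + 2*(c*(1-c)) * x i + c^3*Q)) + a ≤ 0 := by
    rw [hsumg]
    nlinarith [mul_nonneg (mul_nonneg ha0.le (by linarith : (0:ℝ) ≤ 3 - 2*c))
      (by linarith : (0:ℝ) ≤ c*Q - 1)]
  have hφ'2 : φ' ≤ a + d := by have := hφ'.2; rw [ha, hd]; linarith
  have hrhs : (3 * N ^ 2 - 3 * N + 1) / (2 * N ^ 2) * (β - α) = d * ((1-c)*(2-c)) + d := by
    rw [hd, hcdef]
    field_simp [hN0.ne']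
    ring
  rw [hsplit, hrhs]
  linarith [hmain, hag]
end

section
/- Let n ≥ 2, 0 < α ≤ β, κ = β/α, p ∈ (0,1], and set η = 1 − p/(κ(n−1)) and M_f = (n/2)·(β·n − α). Let θ ∈ ℝ, and let (c_t)_{t≥0} and (g_t)_{t≥0} be real sequences such that for all t ≥ 0: c_{t+1} ≤ η·c_t + (1−p)·(θ − (g_{t+1} − g_t)), and (α/2)·n ≤ g_t ≤ (β/2)·n². Then for every T ≥ 1: ∑_{t=1}^T c_t ≤ c_0·∑_{t=1}^T η^t + (1−p)·∑_{t=0}^{T−1} η^t·( M_f + (T−t)·θ ). -/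
noncomputable def seqG (η : ℝ) (g : ℕ → ℝ) : ℕ → ℝ
  | 0 => 0
  | t + 1 => η * seqG η g t + (g t - g (t + 1))

noncomputable def seqR (η : ℝ) (g : ℕ → ℝ) : ℕ → ℝ
  | 0 => 0
  | t + 1 => η * seqR η g t + g (t + 1)

/-- Deterministic recursion underlying the bound on the
expected dynamical regret: if `c_{t+1} ≤ η·c_t + (1-p)·(θ - (g_{t+1} - g_t))`
with `η = 1 - p/(κ(n-1))`, `κ = β/α`, and `(α/2)n ≤ g_t ≤ (β/2)n²` for all `t`,
then `∑_{t=1}^T c_t ≤ c_0·∑_{t=1}^T η^t + (1-p)·∑_{t=0}^{T-1} η^t·(M_f + (T-t)·θ)`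
where `M_f = (n/2)(βn - α)`. -/
theorem stmt_15 (n : ℕ) (hn : 2 ≤ n) (α β p : ℝ) (hα : 0 < α) (hαβ : α ≤ β)
    (hp0 : 0 < p) (hp1 : p ≤ 1) (θ : ℝ) (c g : ℕ → ℝ)
    (hrec : ∀ t : ℕ, c (t + 1) ≤
      (1 - p / ((β / α) * ((n : ℝ) - 1))) * c t + (1 - p) * (θ - (g (t + 1) - g t)))
    (hg : ∀ t : ℕ, α / 2 * (n : ℝ) ≤ g t ∧ g t ≤ β / 2 * (n : ℝ) ^ 2)
    (T : ℕ) (hT : 1 ≤ T) :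
    ∑ t ∈ Finset.Icc 1 T, c t ≤
      c 0 * ∑ t ∈ Finset.Icc 1 T, (1 - p / ((β / α) * ((n : ℝ) - 1))) ^ t
      + (1 - p) * ∑ t ∈ Finset.range T,
          (1 - p / ((β / α) * ((n : ℝ) - 1))) ^ t *
            ((n : ℝ) / 2 * (β * (n : ℝ) - α) + ((T : ℝ) - (t : ℝ)) * θ) := by
  set η : ℝ := 1 - p / ((β / α) * ((n : ℝ) - 1)) with hηdef
  have hn2 : (2:ℝ) ≤ (n:ℝ) := by exact_mod_cast hn
  have hd : (1:ℝ) ≤ (β / α) * ((n : ℝ) - 1) := by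
    have h1 : (1:ℝ) ≤ β / α := (one_le_div hα).mpr hαβ
    nlinarith
  have hη0 : 0 ≤ η := by
    have h := div_le_self hp0.le hd
    rw [hηdef]; linarith
  have hη1 : η ≤ 1 := by
    have h : 0 ≤ p / ((β / α) * ((n : ℝ) - 1)) := div_nonneg hp0.le (by linarith)
    rw [hηdef]; linarith
  have hp' : (0:ℝ) ≤ 1 - p := by linarith
  have hA0 : (0:ℝ) ≤ α / 2 * (n : ℝ) := by positivity
  -- unrolled pointwise bound
  have hc : ∀ t, c t ≤ η ^ t * c 0
      + (1 - p) * (θ * ∑ s ∈ Finset.range t, η ^ s + seqG η g t) := by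
    intro t
    induction t with
    | zero => simp [seqG]
    | succ t ih =>
      have h2 : η * c t ≤ η * (η ^ t * c 0
          + (1 - p) * (θ * ∑ s ∈ Finset.range t, η ^ s + seqG η g t)) :=
        mul_le_mul_of_nonneg_left ih hη0
      calc c (t + 1) ≤ η * c t + (1 - p) * (θ - (g (t + 1) - g t)) := hrec t
        _ ≤ η * (η ^ t * c 0 + (1 - p) * (θ * ∑ s ∈ Finset.range t, η ^ s + seqG η g t))
            + (1 - p) * (θ - (g (t + 1) - g t)) := by linarith
        _ = η ^ (t + 1) * c 0 + (1 - p) * (θ * (η * ∑ s ∈ Finset.range t, η ^ s + 1)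
            + (η * seqG η g t + (g t - g (t + 1)))) := by ring
        _ = η ^ (t + 1) * c 0
            + (1 - p) * (θ * ∑ s ∈ Finset.range (t + 1), η ^ s + seqG η g (t + 1)) := by
          rw [geom_sum_succ]; rfl
  -- key identity for the step
  have hJ : ∀ t, seqG η g (t + 1) + seqR η g (t + 1) = η ^ t * g 0 + seqR η g t := by
    intro t
    induction t with
    | zero => simp [seqG, seqR]
    | succ t ih =>
      show η * seqG η g (t + 1) + (g (t + 1) - g (t + 2))
          + (η * seqR η g (t + 1) + g (t + 2)) = η ^ (t + 1) * g 0 + (η * seqR η g t + g (t + 1))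
      linear_combination η * ih
  -- summed identity
  have hI : ∀ S : ℕ, ∑ t ∈ Finset.Icc 1 S, seqG η g t + seqR η g S
      = (∑ t ∈ Finset.range S, η ^ t) * g 0 := by
    intro S
    induction S with
    | zero => simp [seqR]
    | succ S ih =>
      rw [Finset.sum_Icc_succ_top (by omega : 1 ≤ S + 1), Finset.sum_range_succ]
      have h := hJ S
      linear_combination ih + h
  -- lower bound on R
  have hR : ∀ t, (α / 2 * (n : ℝ)) * ∑ s ∈ Finset.range t, η ^ s ≤ seqR η g t := by
    intro t
    induction t with
    | zero => simp [seqR]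
    | succ t ih =>
      have h1 : η * ((α / 2 * (n : ℝ)) * ∑ s ∈ Finset.range t, η ^ s) ≤ η * seqR η g t :=
        mul_le_mul_of_nonneg_left ih hη0
      have h2 := (hg (t + 1)).1
      rw [geom_sum_succ]
      show _ ≤ η * seqR η g t + g (t + 1)
      nlinarith
  -- double-sum identity for the θ part
  have hX : ∀ S : ℕ, ∑ t ∈ Finset.Icc 1 S, (∑ s ∈ Finset.range t, η ^ s)
      = ∑ t ∈ Finset.range S, η ^ t * ((S : ℝ) - (t : ℝ)) := by
    intro S
    induction S with
    | zero => simp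
    | succ S ih =>
      rw [Finset.sum_Icc_succ_top (by omega : 1 ≤ S + 1), ih]
      have h1 : ∑ t ∈ Finset.range (S + 1), η ^ t * (((S + 1 : ℕ) : ℝ) - (t : ℝ))
          = ∑ t ∈ Finset.range (S + 1), (η ^ t * ((S : ℝ) - (t : ℝ)) + η ^ t) := by
        apply Finset.sum_congr rfl
        intro t _
        push_cast
        ring
      rw [h1, Finset.sum_add_distrib, Finset.sum_range_succ (f := fun t => η ^ t * ((S : ℝ) - (t : ℝ)))]
      simp
  have hS0 : (0:ℝ) ≤ ∑ t ∈ Finset.range T, η ^ t :=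
    Finset.sum_nonneg fun t _ => pow_nonneg hη0 t
  have hg0 : g 0 ≤ β / 2 * (n : ℝ) ^ 2 := (hg 0).2
  -- bound on sum of G
  have hGsum : ∑ t ∈ Finset.Icc 1 T, seqG η g t
      ≤ ((n : ℝ) / 2 * (β * (n : ℝ) - α)) * ∑ t ∈ Finset.range T, η ^ t := by
    have h1 := hI T
    have h2 := hR T
    have h3 : (∑ t ∈ Finset.range T, η ^ t) * g 0
        ≤ (∑ t ∈ Finset.range T, η ^ t) * (β / 2 * (n : ℝ) ^ 2) :=
      mul_le_mul_of_nonneg_left hg0 hS0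
    nlinarith
  -- assemble
  calc ∑ t ∈ Finset.Icc 1 T, c t
      ≤ ∑ t ∈ Finset.Icc 1 T, (η ^ t * c 0
        + (1 - p) * (θ * ∑ s ∈ Finset.range t, η ^ s + seqG η g t)) :=
        Finset.sum_le_sum fun t _ => hc t
    _ = c 0 * ∑ t ∈ Finset.Icc 1 T, η ^ t
        + (1 - p) * (θ * ∑ t ∈ Finset.Icc 1 T, (∑ s ∈ Finset.range t, η ^ s)
          + ∑ t ∈ Finset.Icc 1 T, seqG η g t) := by
        rw [Finset.sum_add_distrib, ← Finset.sum_mul, ← Finset.mul_sum,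
          Finset.sum_add_distrib, ← Finset.mul_sum]
        ring
    _ ≤ c 0 * ∑ t ∈ Finset.Icc 1 T, η ^ t
        + (1 - p) * (θ * ∑ t ∈ Finset.range T, η ^ t * ((T : ℝ) - (t : ℝ))
          + ((n : ℝ) / 2 * (β * (n : ℝ) - α)) * ∑ t ∈ Finset.range T, η ^ t) := by
        rw [hX T]
        nlinarith [hGsum]
    _ = c 0 * ∑ t ∈ Finset.Icc 1 T, η ^ t
        + (1 - p) * ∑ t ∈ Finset.range T,
          η ^ t * ((n : ℝ) / 2 * (β * (n : ℝ) - α) + ((T : ℝ) - (t : ℝ)) * θ) := by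
        congr 1
        rw [Finset.mul_sum, Finset.mul_sum, Finset.mul_sum, ← Finset.sum_add_distrib,
          Finset.mul_sum]
        apply Finset.sum_congr rfl
        intro t _
        ring
end

section
/- Let n ≥ 2, 0 < α ≤ β, κ = β/α, p ∈ (0,1], and set η = 1 − p/(κ(n−1)), θ = (β − α)·(3n² − 3n + 1)/(2n²), M_f = (n/2)·(β·n − α), and let c_0 ≥ 0. Then limsup_{T→∞} (1/T)·( c_0·∑_{t=1}^T η^t + (1−p)·∑_{t=0}^{T−1} η^t·( M_f + (T−t)·θ ) ) ≤ ((1−p)/p)·(n−1)·((3n² − 3n + 1)/(2n²))·β·(κ − 1). -/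
open Filter

set_option maxHeartbeats 2000000 in
/-- Asymptotic averaged regret bound (quadratic case): with
`η = 1 - p/(κ(n-1))`, `θ = (β - α)(3n² - 3n + 1)/(2n²)`, `M_f = (n/2)(βn - α)`
and `c₀ ≥ 0`, the time-averaged upper bound on the regret is asymptotically at
most `((1-p)/p)·(n-1)·((3n² - 3n + 1)/(2n²))·β·(κ - 1)`, where `κ = β/α`. -/
theorem stmt_17 (n : ℕ) (hn : 2 ≤ n) (α β p c₀ : ℝ) (hα : 0 < α) (hαβ : α ≤ β)
    (hp0 : 0 < p) (hp1 : p ≤ 1) (hc₀ : 0 ≤ c₀) :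
    limsup (fun T : ℕ => (1 / (T : ℝ)) *
        (c₀ * ∑ t ∈ Finset.Icc 1 T, (1 - p / ((β / α) * ((n : ℝ) - 1))) ^ t
         + (1 - p) * ∑ t ∈ Finset.range T,
             (1 - p / ((β / α) * ((n : ℝ) - 1))) ^ t *
               ((n : ℝ) / 2 * (β * (n : ℝ) - α)
                 + ((T : ℝ) - (t : ℝ)) *
                     ((β - α) * (3 * (n : ℝ) ^ 2 - 3 * (n : ℝ) + 1)
                       / (2 * (n : ℝ) ^ 2))))) atTop
      ≤ (1 - p) / p * ((n : ℝ) - 1) *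
          ((3 * (n : ℝ) ^ 2 - 3 * (n : ℝ) + 1) / (2 * (n : ℝ) ^ 2)) *
          β * (β / α - 1) := by
  have hn1 : (1 : ℝ) ≤ (n : ℝ) - 1 := by
    have : (2 : ℝ) ≤ (n : ℝ) := by exact_mod_cast hn
    linarith
  have hn0 : (0 : ℝ) < (n : ℝ) := by linarith
  set κ : ℝ := β / α with hκ
  have hκ1 : 1 ≤ κ := (one_le_div hα).mpr hαβ
  have hκn : 1 ≤ κ * ((n : ℝ) - 1) := by nlinarith
  have hκn0 : 0 < κ * ((n : ℝ) - 1) := by linarith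
  set η : ℝ := 1 - p / (κ * ((n : ℝ) - 1)) with hη
  have hratio_le : p / (κ * ((n : ℝ) - 1)) ≤ 1 := by
    rw [div_le_one hκn0]; linarith
  have hratio0 : 0 < p / (κ * ((n : ℝ) - 1)) := div_pos hp0 hκn0
  have hη0 : 0 ≤ η := by simp only [hη]; linarith
  have hη1 : η < 1 := by simp only [hη]; linarith
  have h1η : 0 < 1 - η := by linarith
  set E : ℝ := (3 * (n : ℝ) ^ 2 - 3 * (n : ℝ) + 1) / (2 * (n : ℝ) ^ 2) with hE
  have hE0 : 0 ≤ E := by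
    apply div_nonneg
    · nlinarith
    · positivity
  set θ : ℝ := (β - α) * (3 * (n : ℝ) ^ 2 - 3 * (n : ℝ) + 1) / (2 * (n : ℝ) ^ 2) with hθ
  have hθE : θ = (β - α) * E := by rw [hθ, hE]; ring
  have hθ0 : 0 ≤ θ := by rw [hθE]; exact mul_nonneg (by linarith) hE0
  set Mf : ℝ := (n : ℝ) / 2 * (β * (n : ℝ) - α) with hMf
  have hMf0 : 0 ≤ Mf := by
    apply mul_nonneg (by positivity)
    nlinarith
  have hp1' : 0 ≤ 1 - p := by linarith
  -- geometric sum bound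
  have hgeom : ∀ T : ℕ, ∑ t ∈ Finset.range T, η ^ t ≤ (1 - η)⁻¹ := by
    intro T
    rw [← tsum_geometric_of_lt_one hη0 hη1]
    exact Summable.sum_le_tsum _ (fun i _ => pow_nonneg hη0 i)
      (summable_geometric_of_lt_one hη0 hη1)
  have hgeomIcc : ∀ T : ℕ, ∑ t ∈ Finset.Icc 1 T, η ^ t ≤ (1 - η)⁻¹ := by
    intro T
    calc ∑ t ∈ Finset.Icc 1 T, η ^ t ≤ ∑ t ∈ Finset.range (T + 1), η ^ t := by
          apply Finset.sum_le_sum_of_subset_of_nonneg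
          · intro x hx
            simp only [Finset.mem_Icc] at hx
            simp [Finset.mem_range]; omega
          · intro i _ _; exact pow_nonneg hη0 i
      _ ≤ (1 - η)⁻¹ := hgeom (T + 1)
  set L : ℝ := (1 - p) * θ * (1 - η)⁻¹ with hL
  set C : ℝ := (c₀ + (1 - p) * Mf) * (1 - η)⁻¹ with hC
  set a : ℕ → ℝ := fun T => (1 / (T : ℝ)) *
        (c₀ * ∑ t ∈ Finset.Icc 1 T, η ^ t
         + (1 - p) * ∑ t ∈ Finset.range T,
             η ^ t * (Mf + ((T : ℝ) - (t : ℝ)) * θ)) with ha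
  have key : ∀ T : ℕ, a T ≤ C / (T : ℝ) + L := by
    intro T
    rcases Nat.eq_zero_or_pos T with h0 | hT
    · subst h0
      simp only [ha]
      simp
      rw [hL]
      positivity
    have hT0 : (0 : ℝ) < (T : ℝ) := by exact_mod_cast hT
    have hsum : ∑ t ∈ Finset.range T, η ^ t * (Mf + ((T : ℝ) - (t : ℝ)) * θ)
        ≤ (Mf + (T : ℝ) * θ) * (1 - η)⁻¹ := by
      calc ∑ t ∈ Finset.range T, η ^ t * (Mf + ((T : ℝ) - (t : ℝ)) * θ)
          ≤ ∑ t ∈ Finset.range T, η ^ t * (Mf + (T : ℝ) * θ) := by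
            apply Finset.sum_le_sum
            intro t ht
            apply mul_le_mul_of_nonneg_left _ (pow_nonneg hη0 t)
            have : ((T : ℝ) - (t : ℝ)) * θ ≤ (T : ℝ) * θ := by
              apply mul_le_mul_of_nonneg_right _ hθ0
              have : (0 : ℝ) ≤ (t : ℝ) := Nat.cast_nonneg t
              linarith
            linarith
        _ = (∑ t ∈ Finset.range T, η ^ t) * (Mf + (T : ℝ) * θ) := by
            rw [← Finset.sum_mul]
        _ ≤ (1 - η)⁻¹ * (Mf + (T : ℝ) * θ) := by
            apply mul_le_mul_of_nonneg_right (hgeom T)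
            have : 0 ≤ (T : ℝ) * θ := mul_nonneg hT0.le hθ0
            linarith
        _ = (Mf + (T : ℝ) * θ) * (1 - η)⁻¹ := by ring
    have h2 : a T ≤ (1 / (T : ℝ)) *
        (c₀ * (1 - η)⁻¹ + (1 - p) * ((Mf + (T : ℝ) * θ) * (1 - η)⁻¹)) := by
      simp only [ha]
      apply mul_le_mul_of_nonneg_left _ (by positivity)
      have := hgeomIcc T
      nlinarith [mul_le_mul_of_nonneg_left hsum hp1',
        mul_le_mul_of_nonneg_left (hgeomIcc T) hc₀]
    calc a T ≤ _ := h2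
      _ = C / (T : ℝ) + L := by
          rw [hC, hL]
          field_simp
          ring
  -- limit of the bounding sequence
  have hlim : Tendsto (fun T : ℕ => C / (T : ℝ) + L) atTop (nhds L) := by
    have h1 : Tendsto (fun T : ℕ => C / (T : ℝ)) atTop (nhds 0) :=
      tendsto_const_nhds.div_atTop tendsto_natCast_atTop_atTop
    have := h1.add (tendsto_const_nhds (x := L))
    simpa using this
  have hbound : limsup a atTop ≤ L := by
    have h1 : limsup a atTop ≤ limsup (fun T : ℕ => C / (T : ℝ) + L) atTop := by
      refine limsup_le_limsup (Eventually.of_forall key) ?_ ?_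
      · apply IsCoboundedUnder.of_frequently_ge (a := 0)
        apply Frequently.of_forall
        intro T
        simp only [ha]
        apply mul_nonneg (by positivity)
        apply add_nonneg
        · exact mul_nonneg hc₀ (Finset.sum_nonneg fun i _ => pow_nonneg hη0 i)
        · apply mul_nonneg hp1'
          apply Finset.sum_nonneg
          intro t ht
          apply mul_nonneg (pow_nonneg hη0 t)
          apply add_nonneg hMf0
          apply mul_nonneg _ hθ0
          simp only [Finset.mem_range] at ht
          have : (t : ℝ) < (T : ℝ) := by exact_mod_cast ht
          linarith
      · exact hlim.isBoundedUnder_le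
    rwa [hlim.limsup_eq] at h1
  clear_value a C L Mf θ E η κ
  have hkey : κ * (β - α) = β * (κ - 1) := by
    rw [hκ]; field_simp
  have h1eta : 1 - η = p / (κ * ((n : ℝ) - 1)) := by rw [hη]; ring
  have hLeq : L = (1 - p) / p * ((n : ℝ) - 1) * E * β * (κ - 1) := by
    rw [hL, hθE, h1eta, inv_div]
    linear_combination ((1 - p) * ((n : ℝ) - 1) * E / p) * hkey
  exact hbound.trans (le_of_eq hLeq)
end
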